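/- Let G(z) be the formal power series G = 1/z + ∑_{n≥1} M_n z^{-(n+1)} whose coefficients M_n are polynomials in variables R₁, R₂, … determined by the inverse relation G(R(z)+1/z) = z with R(z) = ∑ R_k z^{k-1}. Then for any k ≥ 1, ∂G/∂R_k = −(1/k)·d/dz[(G(z))^k] = −G(z)^{k−1} G'(z), as an identity of formal power series in 1/z with polynomial coefficients in the R_i. -/

import Mathlib

open Finset PowerSeries

/-- Ground ring: polynomials in the free cumulants `R₁, R₂, …` (variable `n` is `Rₙ`). -/
abbrev RRing : Type := MvPolynomial ℕ ℚ

/-- Formal derivative `d/dw` of a power series in `w` (where `w = 1/z`). -/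
noncomputable def Dw (f : PowerSeries RRing) : PowerSeries RRing :=
  PowerSeries.mk fun m => ((m : RRing) + 1) * coeff (m + 1) f

/-- The derivative `d/dz` expressed in the variable `w = 1/z`: `d/dz = -w² d/dw`. -/
noncomputable def Dz (f : PowerSeries RRing) : PowerSeries RRing :=
  -(X ^ 2 * Dw f)

/-- Coefficientwise partial derivative `∂/∂R_k` of a power series whose coefficients are
polynomials in the `R_i`. -/
noncomputable def pdR (k : ℕ) (f : PowerSeries RRing) : PowerSeries RRing :=
  PowerSeries.mk fun m => MvPolynomial.pderiv k (coeff m f)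

/-!
Write `w = 1/z`, `G = w A` and `P = ∑ₙ n Rₙ Gⁿ⁻¹`. Applying `∂/∂R_k` and `d/dw` to the
fixed-point equation `A = 1 + ∑ₙ Rₙ Gⁿ` gives two linear equations with the same operator:
`(1 - w P) ∂G/∂R_k = w Gᵏ` and `(1 - w P) dG/dw = A`. As `1 - w P` is invertible,
`∂G/∂R_k = w² Gᵏ⁻¹ dG/dw = -Gᵏ⁻¹ dG/dz`.
-/

theorem pow_succ_of_leibniz {R : Type*} [CommSemiring R] (δ : R → R)
    (hδ : ∀ f g, δ (f * g) = δ f * g + f * δ g) (f : R) (n : ℕ) :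
    δ (f ^ (n + 1)) = (n + 1) • (f ^ n * δ f) := by
  induction n with
  | zero => simp
  | succ n ih =>
    rw [pow_succ, hδ, ih]
    ring

theorem coeff_pdR (k m : ℕ) (f : PowerSeries RRing) :
    coeff m (pdR k f) = MvPolynomial.pderiv k (coeff m f) :=
  coeff_mk _ _

theorem pdR_mul (k : ℕ) (f g : PowerSeries RRing) :
    pdR k (f * g) = pdR k f * g + f * pdR k g := by
  refine PowerSeries.ext fun m => ?_
  simp only [coeff_pdR, coeff_mul, map_add, map_sum, MvPolynomial.pderiv_mul,
    Finset.sum_add_distrib]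

theorem Dw_eq_derivative (f : PowerSeries RRing) : Dw f = derivative RRing f := by
  refine PowerSeries.ext fun m => ?_
  rw [Dw, coeff_mk, coeff_derivative, mul_comm]

theorem Dw_mul (f g : PowerSeries RRing) : Dw (f * g) = Dw f * g + f * Dw g := by
  simp only [Dw_eq_derivative, Derivation.leibniz, smul_eq_mul]
  ring

section PowersOfXMul

variable {R : Type*} [CommSemiring R]

theorem coeff_X_mul_pow_of_lt (A : PowerSeries R) {m n : ℕ} (h : m < n) :
    coeff m ((X * A) ^ n) = 0 := by
  rw [mul_pow, coeff_X_pow_mul', if_neg (by omega)]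

theorem coeff_X_mul_pow_self_mul (A : PowerSeries R) {f : PowerSeries R}
    (hf : constantCoeff f = 0) (m : ℕ) :
    coeff m ((X * A) ^ m * f) = 0 := by
  rw [mul_pow, mul_assoc, coeff_X_pow_mul', if_pos le_rfl, Nat.sub_self,
    coeff_zero_eq_constantCoeff, map_mul, hf, mul_zero]

end PowersOfXMul

/-- The relation `A = 1 + ∑ₙ Rₙ (w A)ⁿ`, read off coefficientwise. -/
def IsInverseSeries (A : PowerSeries RRing) : Prop :=
  ∀ m : ℕ, coeff m A =
    (if m = 0 then 1 else 0) + ∑ n ∈ Finset.Icc 1 m, MvPolynomial.X n * coeff m ((X * A) ^ n)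

/-- `∑ₙ n Rₙ Gⁿ⁻¹`, cut off at `n = m + 1` in degree `m`; when `G` has no constant term the
omitted terms vanish. -/
noncomputable def sumRPowDeriv (G : PowerSeries RRing) : PowerSeries RRing :=
  PowerSeries.mk fun m => ∑ n ∈ Finset.Icc 1 (m + 1),
    (n : RRing) * MvPolynomial.X n * coeff m (G ^ (n - 1))

theorem coeff_sumRPowDeriv_mul (A f : PowerSeries RRing) (m : ℕ) :
    coeff m (sumRPowDeriv (X * A) * f) =
      ∑ n ∈ Finset.Icc 1 (m + 1),
        (n : RRing) * MvPolynomial.X n * coeff m ((X * A) ^ (n - 1) * f) := by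
  have htrunc : ∀ p ∈ antidiagonal m,
      coeff p.1 (sumRPowDeriv (X * A)) * coeff p.2 f
        = ∑ n ∈ Finset.Icc 1 (m + 1),
            (n : RRing) * MvPolynomial.X n * coeff p.1 ((X * A) ^ (n - 1)) * coeff p.2 f := by
    intro p hp
    rw [sumRPowDeriv, coeff_mk, Finset.sum_mul]
    refine Finset.sum_subset (Finset.Icc_subset_Icc_right ?_) fun n hn hn' => ?_
    · have := Finset.HasAntidiagonal.antidiagonal.fst_le hp
      omega
    · simp only [Finset.mem_Icc] at hn hn'
      rw [coeff_X_mul_pow_of_lt A (by omega), mul_zero, zero_mul]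
  rw [coeff_mul, Finset.sum_congr rfl htrunc, Finset.sum_comm]
  refine Finset.sum_congr rfl fun n _ => ?_
  rw [coeff_mul, Finset.mul_sum]
  exact Finset.sum_congr rfl fun p _ => by ring

theorem pderiv_X_mul_coeff_pow (k m : ℕ) {n : ℕ} (hn : 1 ≤ n) (f : PowerSeries RRing) :
    MvPolynomial.pderiv k (MvPolynomial.X n * coeff m (f ^ n))
      = (if k = n then coeff m (f ^ k) else 0)
        + (n : RRing) * MvPolynomial.X n * coeff m (f ^ (n - 1) * pdR k f) := by
  obtain ⟨i, rfl⟩ : ∃ i, n = i + 1 := ⟨n - 1, by omega⟩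
  rw [MvPolynomial.pderiv_mul, MvPolynomial.pderiv_X, ← coeff_pdR,
    pow_succ_of_leibniz _ (pdR_mul k), map_nsmul, nsmul_eq_mul, Nat.add_sub_cancel]
  congr 1
  · rcases eq_or_ne k (i + 1) with rfl | hne
    · simp
    · rw [Pi.single_eq_of_ne' hne, if_neg hne, zero_mul]
  · push_cast
    ring

theorem pdR_eq_of_isInverseSeries {A : PowerSeries RRing} (hA : IsInverseSeries A)
    {k : ℕ} (hk : 1 ≤ k) :
    pdR k (X * A) = X * (X * A) ^ k + X * (sumRPowDeriv (X * A) * pdR k (X * A)) := by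
  have hT0 : constantCoeff (pdR k (X * A)) = 0 := by
    rw [← coeff_zero_eq_constantCoeff_apply, coeff_pdR, coeff_zero_X_mul, map_zero]
  refine PowerSeries.ext fun m => ?_
  rcases m with _ | m
  · simp [coeff_pdR]
  rw [map_add, coeff_succ_X_mul, coeff_succ_X_mul, coeff_sumRPowDeriv_mul, coeff_pdR,
    coeff_succ_X_mul, hA m, map_add, map_sum, apply_ite (MvPolynomial.pderiv k),
    Derivation.map_one_eq_zero, map_zero, ite_self, zero_add,
    Finset.sum_congr rfl fun n hn => pderiv_X_mul_coeff_pow k m (Finset.mem_Icc.1 hn).1 _,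
    Finset.sum_add_distrib, Finset.sum_ite_eq]
  congr 1
  · split_ifs with h
    · rfl
    · rw [Finset.mem_Icc, not_and_or] at h
      exact (coeff_X_mul_pow_of_lt A (by omega)).symm
  · refine Finset.sum_subset (Finset.Icc_subset_Icc_right (by omega)) fun n hn hn' => ?_
    obtain rfl : n = m + 1 := by simp only [Finset.mem_Icc] at hn hn'; omega
    rw [Nat.add_sub_cancel, coeff_X_mul_pow_self_mul A hT0, mul_zero]

theorem Dw_eq_of_isInverseSeries {A : PowerSeries RRing} (hA : IsInverseSeries A) :
    Dw (X * A) = A + X * (sumRPowDeriv (X * A) * Dw (X * A)) := by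
  have hDwA : Dw A = sumRPowDeriv (X * A) * Dw (X * A) := by
    refine PowerSeries.ext fun m => ?_
    rw [coeff_sumRPowDeriv_mul, Dw, coeff_mk, hA (m + 1), if_neg m.succ_ne_zero, zero_add,
      Finset.mul_sum]
    refine Finset.sum_congr rfl fun n hn => ?_
    obtain ⟨i, rfl⟩ : ∃ i, n = i + 1 := ⟨n - 1, by simp only [Finset.mem_Icc] at hn; omega⟩
    have hcoeff : ((m : RRing) + 1) * coeff (m + 1) ((X * A) ^ (i + 1))
        = coeff m (Dw ((X * A) ^ (i + 1))) := by
      rw [Dw, coeff_mk]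
    rw [mul_left_comm, hcoeff, pow_succ_of_leibniz _ Dw_mul, map_nsmul, nsmul_eq_mul,
      Nat.add_sub_cancel]
    push_cast
    ring
  conv_lhs => rw [Dw_mul, Dw_eq_derivative (X : PowerSeries RRing), derivative_X, one_mul, hDwA]

theorem pdR_eq_X_sq_mul_pow_mul_Dw {A : PowerSeries RRing} (hA : IsInverseSeries A)
    (k : ℕ) (hk : 1 ≤ k) :
    pdR k (X * A) = X ^ 2 * (X * A) ^ (k - 1) * Dw (X * A) := by
  set u := 1 - X * sumRPowDeriv (X * A)
  have hu : IsUnit u := by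
    rw [isUnit_iff_constantCoeff]
    simp [u]
  have hpdR : u * pdR k (X * A) = X * (X * A) ^ k := by
    linear_combination pdR_eq_of_isInverseSeries hA hk
  have hDw : u * Dw (X * A) = A := by
    linear_combination Dw_eq_of_isInverseSeries hA
  refine hu.mul_left_cancel ?_
  obtain ⟨j, rfl⟩ : ∃ j, k = j + 1 := ⟨k - 1, by omega⟩
  rw [hpdR, Nat.add_sub_cancel]
  linear_combination (X ^ 2 * (X * A) ^ j) * hDw.symm

theorem inv_smul_Dz_pow_succ (f : PowerSeries RRing) (n : ℕ) :
    ((1 : ℚ) / (n + 1 : ℕ)) • Dz (f ^ (n + 1)) = f ^ n * Dz f := by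
  rw [Dz, Dz, pow_succ_of_leibniz _ Dw_mul, ← Nat.cast_smul_eq_nsmul ℚ, mul_smul_comm,
    smul_neg, smul_smul, one_div_mul_cancel (by positivity), one_smul]
  ring

/-- Let `G(z) = w·A(w)` (with `w = 1/z`) be the formal power series whose coefficients are
the universal polynomials in `R₁, R₂, …` determined by the compositional inverse relation
`G(R(z)+1/z) = z`, i.e. `A = 1 + ∑_{n≥1} Rₙ (w·A)ⁿ`. Then for any `k ≥ 1`
`∂G/∂R_k = −(1/k)·d/dz[(G(z))^k] = −G^{k−1}·G'`, as an identity of formal power series in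
`w = 1/z` with coefficients polynomial in the `R_i`. -/
theorem partial_G_partial_Rk (A : PowerSeries RRing)
    (hA : ∀ m : ℕ, coeff m A =
      (if m = 0 then 1 else 0) +
        ∑ n ∈ Finset.Icc 1 m, MvPolynomial.X n * coeff m ((X * A) ^ n))
    (k : ℕ) (hk : 1 ≤ k) :
    pdR k (X * A) = -(((1 : ℚ) / k) • Dz ((X * A) ^ k)) ∧
    pdR k (X * A) = -((X * A) ^ (k - 1) * Dz (X * A)) := by
  have hpdR : pdR k (X * A) = -((X * A) ^ (k - 1) * Dz (X * A)) := by
    rw [pdR_eq_X_sq_mul_pow_mul_Dw hA k hk, Dz]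
    ring
  obtain ⟨j, rfl⟩ : ∃ j, k = j + 1 := ⟨k - 1, by omega⟩
  exact ⟨by rw [inv_smul_Dz_pow_succ, hpdR, Nat.add_sub_cancel], hpdR⟩
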